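/- Let d, m ∈ ℕ, let ψ : ℝ^d → ℝ^d be the taming map ψ(v) = v/(1 + ‖v‖²), let φ : ℝ^d → ℝ and let μ : ℝ^d → ℝ^d satisfy ‖μ(a) − μ(b)‖ ≤ (φ(a) + φ(b))·‖a − b‖ for all a, b ∈ ℝ^d. Let y, z ∈ ℝ^d, let S : ℝ^m → ℝ^d be a linear map, let e_1, …, e_m be the standard orthonormal basis of ℝ^m, and set w = y + ψ(z). Then ‖ψ'(z)(μ(y)) + (1/2)·Σ_{j=1}^m ψ''(z)(S e_j, S e_j) − μ(w)‖ ≤ ‖z‖·( 3‖μ(y)‖ + 7‖S‖²_HS + |φ(w) + φ(y)| ). -/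

import Mathlib

/-! With `f = (1 + ‖z‖²)⁻¹`, the derivatives of `ψ(v) = f(v) v` are explicit:
`ψ'(z) h = f h - 2 f² ⟪z, h⟫ z` and `ψ''(z)(h, h) = -4 f² ⟪z, h⟫ h + (8 f³ ⟪z, h⟫² - 2 f² ‖h‖²) z`.
Since `f ≤ 1`, `f ‖z‖ ≤ 1/2` and `f ‖z‖² ≤ 1`, every term of `ψ'(z) a - a` and of `ψ''(z)(h, h)`
carries a factor `‖z‖`, giving `‖ψ'(z) a - a‖ ≤ 3 ‖z‖ ‖a‖` and `‖ψ''(z)(h, h)‖ ≤ 14 ‖z‖ ‖h‖²`.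
The remaining term `μ(y) - μ(w)` is controlled by the hypothesis on `μ`, because
`‖y - w‖ = ‖ψ(z)‖ ≤ ‖z‖`. -/

/-- The taming map `ψ(v) = v / (1 + ‖v‖²)` on `ℝ^d`. -/
noncomputable def tamingMap (d : ℕ) (v : EuclideanSpace ℝ (Fin d)) : EuclideanSpace ℝ (Fin d) :=
  (1 + ‖v‖ ^ 2)⁻¹ • v

/-- The Hilbert–Schmidt (Frobenius) norm of a linear map `ℝ^m → ℝ^d`, computed via the
standard orthonormal basis of `ℝ^m`. -/
noncomputable def hsNorm {m d : ℕ}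
    (S : EuclideanSpace ℝ (Fin m) →L[ℝ] EuclideanSpace ℝ (Fin d)) : ℝ :=
  Real.sqrt (∑ j : Fin m, ‖S (EuclideanSpace.single j (1 : ℝ))‖ ^ 2)

lemma inv_one_add_sq_le_one (r : ℝ) : (1 + r ^ 2)⁻¹ ≤ 1 :=
  inv_le_one_of_one_le₀ (by nlinarith [sq_nonneg r])

lemma inv_one_add_sq_mul_le_half (r : ℝ) : (1 + r ^ 2)⁻¹ * r ≤ 1 / 2 := by
  rw [inv_mul_le_iff₀ (by positivity)]
  nlinarith [sq_nonneg (r - 1)]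

lemma inv_one_add_sq_mul_sq_le_one (r : ℝ) : (1 + r ^ 2)⁻¹ * r ^ 2 ≤ 1 := by
  rw [inv_mul_le_iff₀ (by positivity)]
  linarith

open RealInnerProductSpace

section Taming

variable {E : Type*} [NormedAddCommGroup E] [InnerProductSpace ℝ E]

lemma contDiff_taming {n : WithTop ℕ∞} : ContDiff ℝ n (fun v : E => (1 + ‖v‖ ^ 2)⁻¹ • v) :=
  ((contDiff_const.add (contDiff_norm_sq ℝ)).inv fun _ => by positivity).smul contDiff_id

lemma hasFDerivAt_inv_one_add_norm_sq (z : E) :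
    HasFDerivAt (fun v : E => (1 + ‖v‖ ^ 2)⁻¹)
      ((-2 * ((1 + ‖z‖ ^ 2)⁻¹) ^ 2) • innerSL ℝ z) z := by
  have hsq : HasFDerivAt (fun v : E => 1 + ‖v‖ ^ 2) (2 • innerSL ℝ z) z :=
    (hasStrictFDerivAt_norm_sq z).hasFDerivAt.const_add 1
  refine ((hasDerivAt_inv (by positivity)).comp_hasFDerivAt z hsq).congr_fderiv ?_
  ext k
  simp only [neg_smul, neg_apply, smul_apply, coe_innerSL_apply, nsmul_eq_mul, smul_eq_mul]
  field_simp
  ring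

lemma fderiv_taming_apply (z h : E) :
    fderiv ℝ (fun v : E => (1 + ‖v‖ ^ 2)⁻¹ • v) z h =
      (1 + ‖z‖ ^ 2)⁻¹ • h + (-2 * ((1 + ‖z‖ ^ 2)⁻¹) ^ 2 * ⟪z, h⟫) • z := by
  have hD : HasFDerivAt (fun v : E => (1 + ‖v‖ ^ 2)⁻¹ • v) _ z :=
    (hasFDerivAt_inv_one_add_norm_sq z).fun_smul (hasFDerivAt_id z)
  rw [hD.fderiv]
  simp [mul_smul]

lemma fderiv_fderiv_taming_apply_self (z h : E) :
    fderiv ℝ (fderiv ℝ (fun v : E => (1 + ‖v‖ ^ 2)⁻¹ • v)) z h h =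
      (-4 * ((1 + ‖z‖ ^ 2)⁻¹) ^ 2 * ⟪z, h⟫) • h +
        (8 * ((1 + ‖z‖ ^ 2)⁻¹) ^ 3 * ⟪z, h⟫ ^ 2 - 2 * ((1 + ‖z‖ ^ 2)⁻¹) ^ 2 * ‖h‖ ^ 2) • z := by
  have hdiff : DifferentiableAt ℝ (fderiv ℝ (fun v : E => (1 + ‖v‖ ^ 2)⁻¹ • v)) z :=
    (contDiff_taming.fderiv_right (m := 1) le_rfl).differentiable one_ne_zero z
  have hdirectional := fderiv_clm_apply hdiff (differentiableAt_const h)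
  simp only [fderiv_fun_const, Pi.zero_apply, ContinuousLinearMap.comp_zero, zero_add]
    at hdirectional
  rw [← ContinuousLinearMap.flip_apply, ← hdirectional]
  simp_rw [fderiv_taming_apply]
  have hw := hasFDerivAt_inv_one_add_norm_sq z
  have hD : HasFDerivAt
      (fun v : E => (1 + ‖v‖ ^ 2)⁻¹ • h + (-2 * ((1 + ‖v‖ ^ 2)⁻¹) ^ 2 * ⟪v, h⟫) • v) _ z :=
    (hw.smul_const h).fun_add ((((hw.pow 2).const_mul (-2)).fun_mul
      ((hasFDerivAt_id z).inner ℝ (hasFDerivAt_const h z))).fun_smul (hasFDerivAt_id z))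
  rw [hD.fderiv]
  simp only [id_eq, add_apply, ContinuousLinearMap.smulRight_apply, smul_apply, coe_innerSL_apply,
    smul_eq_mul, ContinuousLinearMap.id_apply, ContinuousLinearMap.comp_apply,
    ContinuousLinearMap.prod_apply, zero_apply, fderivInnerCLM_apply, inner_zero_right,
    real_inner_self_eq_norm_sq]
  match_scalars <;> ring

lemma norm_taming_le (z : E) : ‖(1 + ‖z‖ ^ 2)⁻¹ • z‖ ≤ ‖z‖ := by
  rw [norm_smul, Real.norm_of_nonneg (by positivity)]
  exact mul_le_of_le_one_left (norm_nonneg z) (inv_one_add_sq_le_one _)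

lemma norm_fderiv_taming_sub_le (z a : E) :
    ‖fderiv ℝ (fun v : E => (1 + ‖v‖ ^ 2)⁻¹ • v) z a - a‖ ≤ 3 * ‖z‖ * ‖a‖ := by
  set f := (1 + ‖z‖ ^ 2)⁻¹ with hf
  have hf0 : 0 ≤ f := by positivity
  have hf1 : f ≤ 1 := inv_one_add_sq_le_one _
  have hfz : f * ‖z‖ ≤ 1 / 2 := inv_one_add_sq_mul_le_half _
  have hsplit : fderiv ℝ (fun v : E => (1 + ‖v‖ ^ 2)⁻¹ • v) z a - a
      = -(f * ‖z‖ ^ 2) • a + (-2 * f ^ 2 * ⟪z, a⟫) • z := by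
    have hf_sub_one : f - 1 = -(f * ‖z‖ ^ 2) := by
      rw [hf]; field_simp; ring
    rw [fderiv_taming_apply, ← hf, ← hf_sub_one]
    module
  have hinner : |⟪z, a⟫| ≤ ‖z‖ * ‖a‖ := abs_real_inner_le_norm z a
  calc _ ≤ ‖-(f * ‖z‖ ^ 2) • a‖ + ‖(-2 * f ^ 2 * ⟪z, a⟫) • z‖ := hsplit ▸ norm_add_le _ _
    _ = f * ‖z‖ ^ 2 * ‖a‖ + 2 * f ^ 2 * |⟪z, a⟫| * ‖z‖ := by
        simp only [norm_smul, norm_neg, Real.norm_eq_abs, abs_mul, abs_pow, abs_neg, abs_two,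
          abs_of_nonneg hf0, abs_norm]
    _ ≤ f * ‖z‖ * (1 + 2 * f) * (‖z‖ * ‖a‖) := by
        nlinarith [mul_le_mul_of_nonneg_left hinner (by positivity : 0 ≤ 2 * f ^ 2 * ‖z‖)]
    _ ≤ 3 * (‖z‖ * ‖a‖) := by gcongr ?_ * _; nlinarith
    _ = 3 * ‖z‖ * ‖a‖ := by ring

lemma norm_fderiv_fderiv_taming_apply_self_le (z h : E) :
    ‖fderiv ℝ (fderiv ℝ (fun v : E => (1 + ‖v‖ ^ 2)⁻¹ • v)) z h h‖ ≤ 14 * ‖z‖ * ‖h‖ ^ 2 := by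
  rw [fderiv_fderiv_taming_apply_self]
  set f := (1 + ‖z‖ ^ 2)⁻¹
  have hf0 : 0 ≤ f := by positivity
  have hf1 : f ≤ 1 := inv_one_add_sq_le_one _
  have hfz : f * ‖z‖ ^ 2 ≤ 1 := inv_one_add_sq_mul_sq_le_one _
  have hinner : |⟪z, h⟫| ≤ ‖z‖ * ‖h‖ := abs_real_inner_le_norm z h
  have hinner_sq : ⟪z, h⟫ ^ 2 ≤ ‖z‖ ^ 2 * ‖h‖ ^ 2 := by
    rw [← sq_abs, ← mul_pow]; gcongr
  calc _ ≤ ‖(-4 * f ^ 2 * ⟪z, h⟫) • h‖ + ‖(8 * f ^ 3 * ⟪z, h⟫ ^ 2 - 2 * f ^ 2 * ‖h‖ ^ 2) • z‖ :=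
        norm_add_le _ _
    _ ≤ 4 * f ^ 2 * |⟪z, h⟫| * ‖h‖ + (8 * f ^ 3 * ⟪z, h⟫ ^ 2 + 2 * f ^ 2 * ‖h‖ ^ 2) * ‖z‖ := by
        simp only [norm_smul, Real.norm_eq_abs]
        gcongr
        · simp [abs_mul, abs_of_nonneg hf0]
        · refine (abs_sub _ _).trans_eq ?_
          rw [abs_of_nonneg (by positivity), abs_of_nonneg (by positivity)]
    _ ≤ (6 * f ^ 2 + 8 * f ^ 2 * (f * ‖z‖ ^ 2)) * (‖z‖ * ‖h‖ ^ 2) := by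
        nlinarith [mul_le_mul_of_nonneg_left hinner (by positivity : 0 ≤ 4 * f ^ 2 * ‖h‖),
          mul_le_mul_of_nonneg_left hinner_sq (by positivity : 0 ≤ 8 * f ^ 3 * ‖z‖)]
    _ ≤ 14 * (‖z‖ * ‖h‖ ^ 2) := by
        have hf_sq : f ^ 2 ≤ 1 := pow_le_one₀ hf0 hf1
        gcongr ?_ * _; nlinarith
    _ = 14 * ‖z‖ * ‖h‖ ^ 2 := by ring

lemma norm_sum_fderiv_fderiv_taming_apply_self_le {ι : Type*} (s : Finset ι) (z : E)
    (h : ι → E) :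
    ‖∑ j ∈ s, fderiv ℝ (fderiv ℝ (fun v : E => (1 + ‖v‖ ^ 2)⁻¹ • v)) z (h j) (h j)‖ ≤
      14 * ‖z‖ * ∑ j ∈ s, ‖h j‖ ^ 2 := by
  rw [Finset.mul_sum]
  exact (norm_sum_le _ _).trans
    (Finset.sum_le_sum fun j _ => norm_fderiv_fderiv_taming_apply_self_le z (h j))

end Taming

lemma hsNorm_sq {m d : ℕ} (S : EuclideanSpace ℝ (Fin m) →L[ℝ] EuclideanSpace ℝ (Fin d)) :
    hsNorm S ^ 2 = ∑ j : Fin m, ‖S (EuclideanSpace.single j (1 : ℝ))‖ ^ 2 :=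
  Real.sq_sqrt (Finset.sum_nonneg fun _ _ => sq_nonneg _)

/-- The local drift error of the tamed scheme: if `μ` satisfies the Lipschitz-type
estimate with weight `φ` and `w = y + ψ(z)`, then
`‖ψ'(z)(μ(y)) + ½ Σⱼ ψ''(z)(S eⱼ, S eⱼ) − μ(w)‖ ≤ ‖z‖ (3‖μ(y)‖ + 7‖S‖²_HS + |φ(w) + φ(y)|)`. -/
theorem tamed_drift_local_error (d m : ℕ)
    (φ : EuclideanSpace ℝ (Fin d) → ℝ)
    (μ : EuclideanSpace ℝ (Fin d) → EuclideanSpace ℝ (Fin d))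
    (hμ : ∀ a b : EuclideanSpace ℝ (Fin d), ‖μ a - μ b‖ ≤ (φ a + φ b) * ‖a - b‖)
    (y z : EuclideanSpace ℝ (Fin d))
    (S : EuclideanSpace ℝ (Fin m) →L[ℝ] EuclideanSpace ℝ (Fin d))
    (w : EuclideanSpace ℝ (Fin d)) (hw : w = y + tamingMap d z) :
    ‖fderiv ℝ (tamingMap d) z (μ y)
        + (1 / 2 : ℝ) • (∑ j : Fin m,
            fderiv ℝ (fderiv ℝ (tamingMap d)) z (S (EuclideanSpace.single j (1 : ℝ)))
              (S (EuclideanSpace.single j (1 : ℝ))))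
        - μ w‖
      ≤ ‖z‖ * (3 * ‖μ y‖ + 7 * (hsNorm S) ^ 2 + |φ w + φ y|) := by
  set secondOrder := ∑ j : Fin m,
    fderiv ℝ (fderiv ℝ (tamingMap d)) z (S (EuclideanSpace.single j (1 : ℝ)))
      (S (EuclideanSpace.single j (1 : ℝ)))
  have hdrift : ‖fderiv ℝ (tamingMap d) z (μ y) - μ y‖ ≤ 3 * ‖z‖ * ‖μ y‖ :=
    norm_fderiv_taming_sub_le z (μ y)
  have hdiffusion : ‖(1 / 2 : ℝ) • secondOrder‖ ≤ 7 * ‖z‖ * hsNorm S ^ 2 := by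
    have hsecondOrder : ‖secondOrder‖ ≤ 14 * ‖z‖ * hsNorm S ^ 2 := by
      rw [hsNorm_sq]
      exact norm_sum_fderiv_fderiv_taming_apply_self_le Finset.univ z _
    rw [norm_smul, Real.norm_of_nonneg (by norm_num)]
    linarith
  have hshift : ‖μ y - μ w‖ ≤ |φ w + φ y| * ‖z‖ := by
    have hyw : ‖y - w‖ ≤ ‖z‖ := by
      rw [hw, sub_add_cancel_left, norm_neg]
      exact norm_taming_le z
    calc ‖μ y - μ w‖ ≤ (φ y + φ w) * ‖y - w‖ := hμ y w
      _ ≤ |φ w + φ y| * ‖z‖ :=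
        mul_le_mul (add_comm (φ y) _ ▸ le_abs_self _) hyw (norm_nonneg _) (abs_nonneg _)
  calc _ = ‖(fderiv ℝ (tamingMap d) z (μ y) - μ y) + (1 / 2 : ℝ) • secondOrder
          + (μ y - μ w)‖ := by
        congr 1; abel
    _ ≤ ‖fderiv ℝ (tamingMap d) z (μ y) - μ y‖ + ‖(1 / 2 : ℝ) • secondOrder‖ + ‖μ y - μ w‖ :=
        norm_add₃_le
    _ ≤ _ := by linarith
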